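/- Let λ : ℕ → ℂ, μ : ℕ → ℝ and suppose there is c > 0 with c|λ(n)| ≤ |λ(n+1)| for all n ≥ 0. Then for every finitely supported u ∈ ℓ²(ℕ) and every a > 0: ‖F⁰₁ u‖² ≤ ⟨u, |λ|²(N) u⟩ ≤ (a²/2)‖u‖² + (2/(a² c⁴))‖F⁰₀ u‖², where |λ|²(N) e_n = |λ(n)|² e_n. In particular F⁰₁ is relatively bounded with respect to F⁰₀ with relative bound 0. -/

import Mathlib

/-- The coefficient `F⁰₀ = -½|λ|²(N+1) + iμ(N)` of the inverse harmonic oscillator model,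
acting pointwise on sequences. -/
noncomputable def ihoF00 (lam : ℕ → ℂ) (mu : ℕ → ℝ) (u : ℕ → ℂ) : ℕ → ℂ :=
  fun n => (-(1 / 2 : ℂ) * (‖lam (n + 1)‖ : ℂ) ^ 2 + Complex.I * (mu n : ℂ)) * u n

/-- The coefficient `F⁰₁ = W*λ̄(N)`: `F⁰₁ e_n = conj(λ(n)) e_{n-1}`, `F⁰₁ e₀ = 0`. -/
noncomputable def ihoF01 (lam : ℕ → ℂ) (u : ℕ → ℂ) : ℕ → ℂ :=
  fun n => (starRingEnd ℂ) (lam (n + 1)) * u (n + 1)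

lemma abs_F01_sq (lam : ℕ → ℂ) (u : ℕ → ℂ) (n : ℕ) :
    ‖ihoF01 lam u n‖ ^ 2
      = ‖lam (n + 1)‖ ^ 2 * ‖u (n + 1)‖ ^ 2 := by
  simp [ihoF01, map_mul, mul_pow]

lemma abs_F00_sq (lam : ℕ → ℂ) (mu : ℕ → ℝ) (u : ℕ → ℂ) (n : ℕ) :
    ‖ihoF00 lam mu u n‖ ^ 2
      = ((‖lam (n + 1)‖ ^ 2 / 2) ^ 2 + (mu n) ^ 2) * ‖u n‖ ^ 2 := by
  unfold ihoF00
  rw [norm_mul, mul_pow]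
  congr 1
  rw [Complex.sq_norm, Complex.normSq_apply]
  simp [Complex.add_re, Complex.add_im, Complex.mul_re, Complex.mul_im,
    ← Complex.ofReal_pow]
  ring

lemma iho_part1 (lam : ℕ → ℂ) (mu : ℕ → ℝ) (c : ℝ) (hc : 0 < c)
    (hgrowth : ∀ n : ℕ, c * ‖lam n‖ ≤ ‖lam (n + 1)‖)
    (u : ℕ → ℂ) (hu : (Function.support u).Finite) (a : ℝ) (ha : 0 < a) :
    (∑' n, ‖ihoF01 lam u n‖ ^ 2
        ≤ ∑' n, ‖lam n‖ ^ 2 * ‖u n‖ ^ 2) ∧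
    (∑' n, ‖lam n‖ ^ 2 * ‖u n‖ ^ 2
        ≤ a ^ 2 / 2 * ∑' n, ‖u n‖ ^ 2
          + 2 / (a ^ 2 * c ^ 4) * ∑' n, ‖ihoF00 lam mu u n‖ ^ 2) := by
  set f : ℕ → ℝ := fun n => ‖lam n‖ ^ 2 * ‖u n‖ ^ 2 with hfdef
  have hsub : ∀ g : ℕ → ℂ, (∀ n, u n = 0 → g n = 0) → Summable fun n => ‖g n‖ ^ 2 := by
    intro g hg
    apply summable_of_finite_support
    apply hu.subset
    intro n hn
    simp only [Function.mem_support] at hn ⊢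
    intro h0
    exact hn (by simp [hg n h0])
  have hfsum : Summable f := by
    apply summable_of_finite_support
    apply hu.subset
    intro n hn
    simp only [Function.mem_support, hfdef] at hn ⊢
    intro h0
    exact hn (by simp [h0])
  have husum : Summable fun n => ‖u n‖ ^ 2 := hsub _ (by intro n h; simp [h])
  have hF00sum : Summable fun n => ‖ihoF00 lam mu u n‖ ^ 2 :=
    hsub _ (by intro n h; simp [ihoF00, h])
  constructor
  · have h1 : (fun n => ‖ihoF01 lam u n‖ ^ 2) = fun n => f (n + 1) := by
      funext n; rw [abs_F01_sq]
    rw [h1, hfsum.tsum_eq_zero_add]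
    have h0 : 0 ≤ f 0 := mul_nonneg (sq_nonneg _) (sq_nonneg _)
    linarith
  · have hpt : ∀ n, f n ≤ a ^ 2 / 2 * ‖u n‖ ^ 2
        + 2 / (a ^ 2 * c ^ 4) * ‖ihoF00 lam mu u n‖ ^ 2 := by
      intro n
      rw [abs_F00_sq]
      set t := ‖lam n‖ with htdef
      set r := ‖lam (n + 1)‖ with hrdef
      set s := ‖u n‖ ^ 2 with hsdef
      have hs : 0 ≤ s := sq_nonneg _
      have ht : 0 ≤ t := norm_nonneg _
      have hr : 0 ≤ r := norm_nonneg _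
      have hgr : c * t ≤ r := hgrowth n
      have hgr4 : c ^ 4 * t ^ 4 ≤ r ^ 4 := by
        calc c ^ 4 * t ^ 4 = (c * t) ^ 4 := by ring
        _ ≤ r ^ 4 := pow_le_pow_left₀ (mul_nonneg hc.le ht) hgr 4
      have hmu : (r ^ 2 / 2) ^ 2 ≤ (r ^ 2 / 2) ^ 2 + mu n ^ 2 := by nlinarith [sq_nonneg (mu n)]
      have hamgm : t ^ 2 ≤ a ^ 2 / 2 + (t ^ 2) ^ 2 / (2 * a ^ 2) := by
        rw [div_add_div _ _ (by norm_num) (by positivity), le_div_iff₀ (by positivity)]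
        nlinarith [sq_nonneg (t ^ 2 - a ^ 2)]
      have key : t ^ 2 * s ≤ a ^ 2 / 2 * s + 2 / (a ^ 2 * c ^ 4) * ((r ^ 2 / 2) ^ 2 * s) := by
        have h2 : 2 / (a ^ 2 * c ^ 4) * ((r ^ 2 / 2) ^ 2 * s) = r ^ 4 / (2 * a ^ 2 * c ^ 4) * s := by
          field_simp
        rw [h2]
        have h3 : (t ^ 2) ^ 2 / (2 * a ^ 2) ≤ r ^ 4 / (2 * a ^ 2 * c ^ 4) := by
          rw [div_le_div_iff₀ (by positivity) (by positivity)]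
          nlinarith [sq_nonneg t, sq_nonneg a]
        nlinarith [mul_le_mul_of_nonneg_right hamgm hs, mul_le_mul_of_nonneg_right h3 hs]
      calc f n = t ^ 2 * s := by rw [hfdef]
      _ ≤ a ^ 2 / 2 * s + 2 / (a ^ 2 * c ^ 4) * ((r ^ 2 / 2) ^ 2 * s) := key
      _ ≤ a ^ 2 / 2 * s + 2 / (a ^ 2 * c ^ 4) * (((r ^ 2 / 2) ^ 2 + mu n ^ 2) * s) := by
          have : (r ^ 2 / 2) ^ 2 * s ≤ ((r ^ 2 / 2) ^ 2 + mu n ^ 2) * s :=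
            mul_le_mul_of_nonneg_right hmu hs
          have hpos : 0 ≤ 2 / (a ^ 2 * c ^ 4) := by positivity
          nlinarith [mul_le_mul_of_nonneg_left this hpos]
    calc ∑' n, f n ≤ ∑' n, (a ^ 2 / 2 * ‖u n‖ ^ 2
          + 2 / (a ^ 2 * c ^ 4) * ‖ihoF00 lam mu u n‖ ^ 2) :=
        Summable.tsum_le_tsum hpt hfsum ((husum.mul_left _).add (hF00sum.mul_left _))
    _ = a ^ 2 / 2 * ∑' n, ‖u n‖ ^ 2
          + 2 / (a ^ 2 * c ^ 4) * ∑' n, ‖ihoF00 lam mu u n‖ ^ 2 := by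
        rw [Summable.tsum_add (husum.mul_left _) (hF00sum.mul_left _), tsum_mul_left, tsum_mul_left]

lemma sqrt_add_le' {x y : ℝ} (hx : 0 ≤ x) (hy : 0 ≤ y) :
    Real.sqrt (x + y) ≤ Real.sqrt x + Real.sqrt y := by
  have h : x + y ≤ (Real.sqrt x + Real.sqrt y) ^ 2 := by
    have := Real.sq_sqrt hx
    have := Real.sq_sqrt hy
    nlinarith [Real.sqrt_nonneg x, Real.sqrt_nonneg y, mul_nonneg (Real.sqrt_nonneg x) (Real.sqrt_nonneg y)]
  calc Real.sqrt (x + y) ≤ Real.sqrt ((Real.sqrt x + Real.sqrt y) ^ 2) := Real.sqrt_le_sqrt h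
  _ = Real.sqrt x + Real.sqrt y := Real.sqrt_sq (by positivity)

/-- Suppose `c > 0` satisfies `c|λ(n)| ≤ |λ(n+1)|` for all `n`.  Then for
every finitely supported `u ∈ ℓ²(ℕ)` and every `a > 0`:
`‖F⁰₁ u‖² ≤ ⟨u, |λ|²(N) u⟩ ≤ (a²/2)‖u‖² + (2/(a²c⁴))‖F⁰₀ u‖²`;
in particular `F⁰₁` is relatively bounded with respect to `F⁰₀` with relative bound `0`. -/
theorem iho_relative_bound_zero (lam : ℕ → ℂ) (mu : ℕ → ℝ) (c : ℝ) (hc : 0 < c)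
    (hgrowth : ∀ n : ℕ, c * ‖lam n‖ ≤ ‖lam (n + 1)‖) :
    (∀ (u : ℕ → ℂ), (Function.support u).Finite → ∀ a : ℝ, 0 < a →
      (∑' n, ‖ihoF01 lam u n‖ ^ 2
          ≤ ∑' n, ‖lam n‖ ^ 2 * ‖u n‖ ^ 2) ∧
      (∑' n, ‖lam n‖ ^ 2 * ‖u n‖ ^ 2
          ≤ a ^ 2 / 2 * ∑' n, ‖u n‖ ^ 2
            + 2 / (a ^ 2 * c ^ 4) * ∑' n, ‖ihoF00 lam mu u n‖ ^ 2)) ∧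
    ∀ ε : ℝ, 0 < ε → ∃ C : ℝ, 0 ≤ C ∧ ∀ (u : ℕ → ℂ), (Function.support u).Finite →
      Real.sqrt (∑' n, ‖ihoF01 lam u n‖ ^ 2)
        ≤ C * Real.sqrt (∑' n, ‖u n‖ ^ 2)
          + ε * Real.sqrt (∑' n, ‖ihoF00 lam mu u n‖ ^ 2) := by
  refine ⟨fun u hu a ha => iho_part1 lam mu c hc hgrowth u hu a ha, ?_⟩
  intro ε hε
  set C : ℝ := 1 / (ε * c ^ 2) with hCdef
  have hC : 0 < C := by positivity
  refine ⟨C, hC.le, ?_⟩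
  intro u hu
  set a : ℝ := Real.sqrt 2 * C with hadef
  have ha : 0 < a := by positivity
  obtain ⟨h1, h2⟩ := iho_part1 lam mu c hc hgrowth u hu a ha
  have ha2 : a ^ 2 = 2 * C ^ 2 := by
    rw [hadef, mul_pow, Real.sq_sqrt (by norm_num : (0:ℝ) ≤ 2)]
  have he1 : a ^ 2 / 2 = C ^ 2 := by rw [ha2]; ring
  have he2 : 2 / (a ^ 2 * c ^ 4) = ε ^ 2 := by
    rw [ha2, hCdef]
    field_simp
  set X := ∑' n, ‖ihoF01 lam u n‖ ^ 2 with hX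
  set U := ∑' n, ‖u n‖ ^ 2 with hU
  set F := ∑' n, ‖ihoF00 lam mu u n‖ ^ 2 with hF
  have hUnn : 0 ≤ U := tsum_nonneg fun n => sq_nonneg _
  have hFnn : 0 ≤ F := tsum_nonneg fun n => sq_nonneg _
  have hXle : X ≤ C ^ 2 * U + ε ^ 2 * F := by
    rw [← he1, ← he2]; exact h1.trans h2
  calc Real.sqrt X ≤ Real.sqrt (C ^ 2 * U + ε ^ 2 * F) := Real.sqrt_le_sqrt hXle
  _ ≤ Real.sqrt (C ^ 2 * U) + Real.sqrt (ε ^ 2 * F) :=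
      sqrt_add_le' (by positivity) (by positivity)
  _ = C * Real.sqrt U + ε * Real.sqrt F := by
      rw [Real.sqrt_mul (sq_nonneg C), Real.sqrt_mul (sq_nonneg ε),
        Real.sqrt_sq hC.le, Real.sqrt_sq hε.le]
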